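/- Let L(λ) := M_{τ_1}(Y_1) M_{σ_1}(X_1) (λ M_τ^P − M_σ^P) M_{σ_2}(X_2) M_{τ_2}(Y_2) be an EGFP of P(λ), and suppose 0 ∈ σ and −m ∈ τ. Then (e^T_{m−c_0(σ)} ⊗ I_n) M_{σ_2}(X_2) M_{τ_2}(Y_2) = e^T_{m−c_0(σ,σ_2)} ⊗ I_n, and M_{τ_1}(Y_1) M_{σ_1}(X_1) (e_{m−i_0(σ)} ⊗ I_n) = e_{m−i_0(σ_1,σ)} ⊗ I_n. -/

import Mathlib

open Matrix Polynomial

/-- Signed indices: `pos k` denotes `k` and `neg k` denotes `−k`, with `−0` and `0` distinct. -/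
inductive SIdx : Type where
  | pos : ℕ → SIdx
  | neg : ℕ → SIdx
deriving DecidableEq

namespace SIdx

/-- The absolute value of a signed index. -/
def val : SIdx → ℕ
  | pos k => k
  | neg k => k

/-- Whether a signed index is negative. -/
def isNeg : SIdx → Bool
  | pos _ => false
  | neg _ => true

/-- The successor `t + 1` of a signed index (`−s + 1 = −(s−1)`). -/
def succ : SIdx → SIdx
  | pos k => pos (k + 1)
  | neg 0 => pos 0
  | neg (k + 1) => neg k

/-- Negation of a signed index. -/
def negate : SIdx → SIdx
  | pos k => neg k
  | neg k => pos k

end SIdx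

/-- The ascending chain `(t, t+1, …, t+p)`. -/
def chainUp (t : SIdx) : ℕ → List SIdx
  | 0 => [t]
  | p + 1 => t :: chainUp t.succ p

/-- The number of consecutions `c_t(α)` of the index tuple `α` at `t` (`−1` when `t ∉ α`):
the largest `p` such that `(t, t+1, …, t+p)` is a subtuple (sublist) of `α`. -/
noncomputable def consAt (α : List SIdx) (t : SIdx) : ℤ :=
  letI := Classical.decPred (fun p : ℕ => (chainUp t p).Sublist α)
  if t ∈ α then (Nat.findGreatest (fun p : ℕ => (chainUp t p).Sublist α) α.length : ℤ) else -1

/-- The number of inversions `i_t(α)` of the index tuple `α` at `t` (`−1` when `t ∉ α`):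
the largest `q` such that `(t+q, …, t+1, t)` is a subtuple (sublist) of `α`. -/
noncomputable def invsAt (α : List SIdx) (t : SIdx) : ℤ :=
  letI := Classical.decPred (fun p : ℕ => ((chainUp t p).reverse).Sublist α)
  if t ∈ α then (Nat.findGreatest (fun p : ℕ => ((chainUp t p).reverse).Sublist α) α.length : ℤ)
  else -1

/-- The Successor Infix Property: between any two equal entries there is an occurrence of
their successor. -/
def SIP (α : List SIdx) : Prop :=
  ∀ a b : Fin α.length, a < b → α.get a = α.get b →
    ∃ c : Fin α.length, a < c ∧ c < b ∧ α.get c = (α.get a).succ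

/-- The `mn × mn` elementary matrix `M_k(X)` (viewed as an `m × m` block matrix with
`n × n` blocks): `M_0(X) = M_{−0}(X) = diag(I_{(m−1)n}, X)`,
`M_m(X) = M_{−m}(X) = diag(X, I_{(m−1)n})`, and for `1 ≤ i ≤ m−1` the matrix `M_i(X)`
(resp. `M_{−i}(X)`) is the identity except for the 2×2 block submatrix
`[[X, I],[I, 0]]` (resp. `[[0, I],[I, X]]`) in block rows/columns `(m−i, m−i+1)`
(1-indexed). -/
noncomputable def elemMat (m n : ℕ) (k : SIdx) (X : Matrix (Fin n) (Fin n) ℂ) :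
    Matrix (Fin m × Fin n) (Fin m × Fin n) ℂ := fun p q =>
  if k.val = 0 then
    if p.1 = q.1 then (if (p.1 : ℕ) = m - 1 then X p.2 q.2 else if p.2 = q.2 then 1 else 0)
    else 0
  else if k.val = m then
    if p.1 = q.1 then (if (p.1 : ℕ) = 0 then X p.2 q.2 else if p.2 = q.2 then 1 else 0)
    else 0
  else
    if (p.1 : ℕ) = m - k.val - 1 ∧ (q.1 : ℕ) = m - k.val - 1 then
      (if k.isNeg then 0 else X p.2 q.2)
    else if ((p.1 : ℕ) = m - k.val - 1 ∧ (q.1 : ℕ) = m - k.val) ∨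
        ((p.1 : ℕ) = m - k.val ∧ (q.1 : ℕ) = m - k.val - 1) then
      (if p.2 = q.2 then 1 else 0)
    else if (p.1 : ℕ) = m - k.val ∧ (q.1 : ℕ) = m - k.val then
      (if k.isNeg then X p.2 q.2 else 0)
    else if p = q then 1 else 0

/-- `M_t(X) = M_{t_1}(X_1) ⋯ M_{t_r}(X_r)` for an index tuple `t` with matrix assignment `Xs`. -/
noncomputable def prodAssign (m n : ℕ) (t : List SIdx) (Xs : List (Matrix (Fin n) (Fin n) ℂ)) :
    Matrix (Fin m × Fin n) (Fin m × Fin n) ℂ :=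
  ((t.zip Xs).map fun p => elemMat m n p.1 p.2).prod

/-- The trivial (Fiedler) matrix assignment of `P(λ) = Σ λ^i A_i`:
`M_i^P = M_i(−A_i)` for `0 ≤ i ≤ m−1`, `M_m^P = (M_{−m}^P)⁻¹ = M_m(A_m⁻¹)`,
`M_{−i}^P = M_{−i}(A_i)` for `1 ≤ i ≤ m`, and `M_{−0}^P = (M_0^P)⁻¹ = M_{−0}((−A_0)⁻¹)`. -/
noncomputable def fiedlerX (m : ℕ) {n : ℕ} (A : ℕ → Matrix (Fin n) (Fin n) ℂ) :
    SIdx → Matrix (Fin n) (Fin n) ℂ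
  | .pos i => if i = m then (A m)⁻¹ else -A i
  | .neg i => if i = 0 then (-A 0)⁻¹ else A i

/-- `M_t^P`, the product of Fiedler matrices of `P` along the index tuple `t`. -/
noncomputable def prodFiedler (m n : ℕ) (A : ℕ → Matrix (Fin n) (Fin n) ℂ) (t : List SIdx) :
    Matrix (Fin m × Fin n) (Fin m × Fin n) ℂ :=
  (t.map fun k => elemMat m n k (fiedlerX m A k)).prod

/-- A nonsingular matrix assignment: the matrices assigned to positions with indices
`±0` or `±m` are nonsingular. -/
def NonsingAssign (m : ℕ) {n : ℕ} (t : List SIdx) (Xs : List (Matrix (Fin n) (Fin n) ℂ)) :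
    Prop :=
  t.length = Xs.length ∧ ∀ p ∈ t.zip Xs, (p.1.val = 0 ∨ p.1.val = m) → IsUnit p.2

/-- The data of an extended generalized Fiedler pencil (EGFP)
`L(λ) = M_{τ₁}(Y₁) M_{σ₁}(X₁) (λ M_τ^P − M_σ^P) M_{σ₂}(X₂) M_{τ₂}(Y₂)`
of the `n × n` matrix polynomial `P(λ) = Σ_{i=0}^m λ^i A_i` of degree `m ≥ 2`. -/
structure EGFPData (m n : ℕ) where
  /-- coefficients of `P` -/
  A : ℕ → Matrix (Fin n) (Fin n) ℂ
  sig : List SIdx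
  tau : List SIdx
  sig1 : List SIdx
  sig2 : List SIdx
  tau1 : List SIdx
  tau2 : List SIdx
  X1 : List (Matrix (Fin n) (Fin n) ℂ)
  X2 : List (Matrix (Fin n) (Fin n) ℂ)
  Y1 : List (Matrix (Fin n) (Fin n) ℂ)
  Y2 : List (Matrix (Fin n) (Fin n) ℂ)
  hm : 2 ≤ m
  hAm : A m ≠ 0
  hsigpos : ∀ k ∈ sig, k.isNeg = false
  htauneg : ∀ k ∈ tau, k.isNeg = true
  /-- `(σ, ω)` is a permutation of `{0, 1, …, m}`, where `τ = −ω`. -/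
  hperm : List.Perm (sig.map SIdx.val ++ tau.map SIdx.val) (List.range (m + 1))
  hsig1 : ∀ k ∈ sig1, k ∈ sig ∧ k.val + 2 ≤ m
  hsig2 : ∀ k ∈ sig2, k ∈ sig ∧ k.val + 2 ≤ m
  htau1 : ∀ k ∈ tau1, k ∈ tau ∧ 2 ≤ k.val
  htau2 : ∀ k ∈ tau2, k ∈ tau ∧ 2 ≤ k.val
  hSIPsig : SIP (sig1 ++ sig ++ sig2)
  hSIPtau : SIP (tau1 ++ tau ++ tau2)
  hX1 : NonsingAssign m sig1 X1
  hX2 : NonsingAssign m sig2 X2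
  hY1 : NonsingAssign m tau1 Y1
  hY2 : NonsingAssign m tau2 Y2
  hA0 : SIdx.neg 0 ∈ tau → IsUnit (A 0)
  hAmUnit : SIdx.pos m ∈ sig → IsUnit (A m)

namespace EGFPData

variable {m n : ℕ}

/-- `M_{τ₁}(Y₁) M_{σ₁}(X₁)`. -/
noncomputable def leftFac (E : EGFPData m n) : Matrix (Fin m × Fin n) (Fin m × Fin n) ℂ :=
  prodAssign m n E.tau1 E.Y1 * prodAssign m n E.sig1 E.X1

/-- `M_{σ₂}(X₂) M_{τ₂}(Y₂)`. -/
noncomputable def rightFac (E : EGFPData m n) : Matrix (Fin m × Fin n) (Fin m × Fin n) ℂ :=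
  prodAssign m n E.sig2 E.X2 * prodAssign m n E.tau2 E.Y2

/-- The coefficient `L₁` of `λ` in `L(λ) = λ L₁ − L₀`. -/
noncomputable def L1 (E : EGFPData m n) : Matrix (Fin m × Fin n) (Fin m × Fin n) ℂ :=
  E.leftFac * prodFiedler m n E.A E.tau * E.rightFac

/-- The constant term `L₀` in `L(λ) = λ L₁ − L₀`. -/
noncomputable def L0 (E : EGFPData m n) : Matrix (Fin m × Fin n) (Fin m × Fin n) ℂ :=
  E.leftFac * prodFiedler m n E.A E.sig * E.rightFac

end EGFPData

/-- The `(i, j)` block (of size `n × n`) of an `mn × mn` matrix. -/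
def blockOf {m n : ℕ} (M : Matrix (Fin m × Fin n) (Fin m × Fin n) ℂ) (i j : Fin m) :
    Matrix (Fin n) (Fin n) ℂ := fun p q => M (i, p) (j, q)

/-- Block penta-diagonal: all blocks `B_{ij}` with `|i − j| > 2` vanish. -/
def BlockPenta {m n : ℕ} (M : Matrix (Fin m × Fin n) (Fin m × Fin n) ℂ) : Prop :=
  ∀ i j : Fin m, ((i : ℕ) + 2 < (j : ℕ) ∨ (j : ℕ) + 2 < (i : ℕ)) → blockOf M i j = 0

/-- Block tridiagonal: all blocks `B_{ij}` with `|i − j| > 1` vanish. -/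
def BlockTri {m n : ℕ} (M : Matrix (Fin m × Fin n) (Fin m × Fin n) ℂ) : Prop :=
  ∀ i j : Fin m, ((i : ℕ) + 1 < (j : ℕ) ∨ (j : ℕ) + 1 < (i : ℕ)) → blockOf M i j = 0

/-- `e_j^T ⊗ I_n` as an `n × mn` matrix, for a 1-indexed block index `j`
(zero when `j` is out of range). -/
def rowSel (m n : ℕ) (j : ℤ) : Matrix (Fin n) (Fin m × Fin n) ℂ :=
  fun p q => if ((q.1 : ℕ) : ℤ) + 1 = j ∧ p = q.2 then 1 else 0

/-- `e_j ⊗ I_n` as an `mn × n` matrix, for a 1-indexed block index `j`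
(zero when `j` is out of range). -/
def colSel (m n : ℕ) (j : ℤ) : Matrix (Fin m × Fin n) (Fin n) ℂ :=
  fun p q => if ((p.1 : ℕ) : ℤ) + 1 = j ∧ p.2 = q then 1 else 0

/-- The matrix polynomial `P(λ) = Σ_{i=0}^m λ^i A_i` as an `n × n` matrix over `ℂ[λ]`. -/
noncomputable def polyP (m n : ℕ) (A : ℕ → Matrix (Fin n) (Fin n) ℂ) :
    Matrix (Fin n) (Fin n) (Polynomial ℂ) := fun p q =>
  ∑ i ∈ Finset.range (m + 1), Polynomial.C (A i p q) * Polynomial.X ^ i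

namespace EGFPAux

open List

/-- ascending chain `pos 0, …, pos p` -/
def chain (p : ℕ) : List SIdx := (List.range (p+1)).map SIdx.pos

lemma chainUp_pos (a p : ℕ) :
    chainUp (SIdx.pos a) p = (List.range (p+1)).map (fun i => SIdx.pos (a + i)) := by
  induction p generalizing a with
  | zero => simp [chainUp, List.range_succ]
  | succ p ih =>
    show SIdx.pos a :: chainUp (SIdx.pos (a+1)) p = _
    rw [ih (a+1)]
    conv_rhs => rw [List.range_succ_eq_map]
    rw [List.map_cons, List.map_map]
    refine congrArg₂ List.cons (by simp) (List.map_congr_left fun i hi => ?_)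
    simp only [Function.comp_apply]
    congr 1
    omega

lemma chainUp_eq (p : ℕ) : chainUp (SIdx.pos 0) p = chain p := by
  rw [chainUp_pos, chain]
  simp

lemma chain_succ (p : ℕ) : chain (p+1) = chain p ++ [SIdx.pos (p+1)] := by
  simp [chain, List.range_succ]

lemma chain_snoc (p : ℕ) : chain p = ((List.range p).map SIdx.pos) ++ [SIdx.pos p] := by
  simp [chain, List.range_succ]

lemma chain_length (p : ℕ) : (chain p).length = p + 1 := by simp [chain]

lemma pos_mem_chain (p : ℕ) : SIdx.pos p ∈ chain p := by
  simp only [chain, List.mem_map]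
  exact ⟨p, by simp, rfl⟩

lemma zero_mem_chain (p : ℕ) : SIdx.pos 0 ∈ chain p := by
  simp only [chain, List.mem_map]
  exact ⟨0, by simp, rfl⟩

lemma chain_mono {p q : ℕ} (h : p ≤ q) : chain p <+ chain q :=
  (List.range_sublist.mpr (by omega)).map _

/-- reversed chain `pos p, …, pos 0` -/
def rchain (p : ℕ) : List SIdx := (chain p).reverse

lemma rchain_cons (p : ℕ) : rchain (p+1) = SIdx.pos (p+1) :: rchain p := by
  simp [rchain, chain_succ]

lemma rchain_eq (p : ℕ) :
    rchain p = SIdx.pos p :: ((List.range p).map SIdx.pos).reverse := by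
  rw [rchain, chain_snoc]; simp

lemma rchain_length (p : ℕ) : (rchain p).length = p + 1 := by simp [rchain, chain_length]

lemma pos_mem_rchain (p : ℕ) : SIdx.pos p ∈ rchain p := by
  simp [rchain, pos_mem_chain]

lemma zero_mem_rchain (p : ℕ) : SIdx.pos 0 ∈ rchain p := by
  simp [rchain, zero_mem_chain]

/-! ### characterization of `consAt` and `invsAt` -/

lemma fg_good {Q : ℕ → Prop} {inst : DecidablePred Q} {b : ℕ} (hQ0 : Q 0)
    (hlen : ∀ k, Q k → k ≤ b) :
    Q (@Nat.findGreatest Q inst b) ∧ ¬ Q (@Nat.findGreatest Q inst b + 1) := by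
  constructor
  · exact Nat.findGreatest_spec (Nat.zero_le _) hQ0
  · intro hcon
    exact Nat.findGreatest_is_greatest (Nat.lt_succ_self _) (hlen _ hcon) hcon

lemma consAt_spec {α : List SIdx} (h : SIdx.pos 0 ∈ α) :
    ∃ c : ℕ, consAt α (SIdx.pos 0) = (c : ℤ) ∧ chain c <+ α ∧ ¬ chain (c+1) <+ α := by
  have hlen : ∀ k : ℕ, (chainUp (SIdx.pos 0) k).Sublist α → k ≤ α.length := by
    intro k hk
    have := hk.length_le
    rw [chainUp_eq, chain_length] at this
    omega
  have h0 : (chainUp (SIdx.pos 0) 0).Sublist α := by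
    simpa [chainUp] using List.singleton_sublist.mpr h
  obtain ⟨hs, hns⟩ := fg_good (Q := fun p : ℕ => (chainUp (SIdx.pos 0) p).Sublist α)
    (inst := Classical.decPred _) h0 hlen
  rw [consAt, if_pos h]
  refine ⟨_, rfl, ?_, ?_⟩
  · simpa only [chainUp_eq] using hs
  · intro hc
    exact hns (by simpa only [chainUp_eq] using hc)

lemma consAt_eq {α : List SIdx} {c : ℕ} (h1 : chain c <+ α) (h2 : ¬ chain (c+1) <+ α) :
    consAt α (SIdx.pos 0) = (c : ℤ) := by
  have hmem : SIdx.pos 0 ∈ α := h1.subset (zero_mem_chain c)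
  obtain ⟨c', hc', h1', h2'⟩ := consAt_spec hmem
  rw [hc']
  have : c' = c := by
    rcases Nat.lt_trichotomy c' c with h | h | h
    · exact absurd (((chain_mono (by omega)).trans h1)) h2'
    · exact h
    · exact absurd ((chain_mono (by omega)).trans h1') h2
  omega

lemma invsAt_spec {α : List SIdx} (h : SIdx.pos 0 ∈ α) :
    ∃ c : ℕ, invsAt α (SIdx.pos 0) = (c : ℤ) ∧ rchain c <+ α ∧ ¬ rchain (c+1) <+ α := by
  have hlen : ∀ k : ℕ, ((chainUp (SIdx.pos 0) k).reverse).Sublist α → k ≤ α.length := by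
    intro k hk
    have := hk.length_le
    rw [List.length_reverse, chainUp_eq, chain_length] at this
    omega
  have h0 : ((chainUp (SIdx.pos 0) 0).reverse).Sublist α := by
    simpa [chainUp] using List.singleton_sublist.mpr h
  obtain ⟨hs, hns⟩ := fg_good
    (Q := fun p : ℕ => ((chainUp (SIdx.pos 0) p).reverse).Sublist α)
    (inst := Classical.decPred _) h0 hlen
  rw [invsAt, if_pos h]
  refine ⟨_, rfl, ?_, ?_⟩
  · simpa only [chainUp_eq, rchain] using hs
  · intro hc
    refine hns ?_
    have : rchain (_ + 1) <+ α := hc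
    rw [rchain] at this
    simpa only [chainUp_eq] using this

lemma rchain_mono {p q : ℕ} (h : p ≤ q) : rchain p <+ rchain q := by
  induction q with
  | zero => have : p = 0 := by omega
            simp [this]
  | succ q ih =>
    rcases Nat.lt_or_ge p (q+1) with h' | h'
    · exact (ih (by omega)).trans (by rw [rchain_cons]; exact List.sublist_cons_self _ _)
    · have : p = q + 1 := by omega
      simp [this]

lemma invsAt_eq {α : List SIdx} {c : ℕ} (h1 : rchain c <+ α) (h2 : ¬ rchain (c+1) <+ α) :
    invsAt α (SIdx.pos 0) = (c : ℤ) := by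
  classical
  have hmem : SIdx.pos 0 ∈ α := h1.subset (zero_mem_rchain c)
  obtain ⟨c', hc', h1', h2'⟩ := invsAt_spec hmem
  rw [hc']
  have : c' = c := by
    rcases Nat.lt_trichotomy c' c with h | h | h
    · exact absurd (((rchain_mono (by omega)).trans h1)) h2'
    · exact h
    · exact absurd ((rchain_mono (by omega)).trans h1') h2
  omega

/-! ### sublist decompositions -/

lemma snoc_sublist_decomp {l : List SIdx} {x : SIdx} {δ : List SIdx}
    (h : l ++ [x] <+ δ) : ∃ δ₁ δ₂, δ = δ₁ ++ x :: δ₂ ∧ l <+ δ₁ := by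
  rw [List.append_sublist_iff] at h
  obtain ⟨r₁, r₂, rfl, h1, h2⟩ := h
  rw [List.singleton_sublist] at h2
  obtain ⟨a, b, rfl⟩ := List.append_of_mem h2
  exact ⟨r₁ ++ a, b, by simp, h1.trans (List.sublist_append_left _ _)⟩

lemma cons_sublist_decomp {l : List SIdx} {x : SIdx} {δ : List SIdx}
    (h : x :: l <+ δ) : ∃ δ₁ δ₂, δ = δ₁ ++ x :: δ₂ ∧ l <+ δ₂ := by
  rw [List.cons_sublist_iff] at h
  obtain ⟨r₁, r₂, rfl, hx, hl⟩ := h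
  obtain ⟨a, b, rfl⟩ := List.append_of_mem hx
  exact ⟨a, b ++ r₂, by simp, hl.trans (List.sublist_append_right _ _)⟩

lemma snoc_sublist_snoc {l : List SIdx} {x k : SIdx} {δ : List SIdx}
    (h : l ++ [x] <+ δ ++ [k]) : l ++ [x] <+ δ ∨ x = k := by
  rw [List.sublist_append_iff] at h
  obtain ⟨l₁, l₂, heq, h1, h2⟩ := h
  rw [List.sublist_cons_iff] at h2
  rcases h2 with h2 | ⟨r, hr, hr'⟩
  · rw [List.sublist_nil] at h2
    subst h2
    rw [List.append_nil] at heq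
    subst heq
    exact Or.inl h1
  · rw [List.sublist_nil] at hr'
    subst hr'
    subst hr
    have := List.append_inj' heq rfl
    have h2 : x = k := by simpa using this.2
    exact Or.inr h2
/-! ### SIP helpers -/

lemma sip_of_eq {L u v w : List SIdx} (hs : SIP L) (he : L = u ++ v ++ w) : SIP v := by
  subst he
  intro a b hab hget
  have hlen : ∀ i : ℕ, i < v.length → u.length + i < (u ++ v ++ w).length := by
    intro i hi
    simp only [List.length_append]
    omega
  have hget' : ∀ (i : ℕ) (hi : i < v.length),
      (u ++ v ++ w).get ⟨u.length + i, hlen i hi⟩ = v.get ⟨i, hi⟩ := by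
    intro i hi
    show (u ++ v ++ w)[u.length + i]'(hlen i hi) = v[i]'hi
    rw [List.getElem_append_left (by simp only [List.length_append]; omega),
      List.getElem_append_right (by omega)]
    congr 1
    omega
  obtain ⟨c, hc1, hc2, hc3⟩ := hs ⟨u.length + a.1, hlen a.1 a.2⟩ ⟨u.length + b.1, hlen b.1 b.2⟩
    (by simp only [Fin.lt_def, Fin.val_mk]; simp only [Fin.lt_def, Fin.val_mk] at hab; omega)
    (by rw [hget' a.1 a.2, hget' b.1 b.2]; simpa using hget)
  simp only [Fin.lt_def, Fin.val_mk] at hc1 hc2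
  have hj : c.1 - u.length < v.length := by have := b.2; omega
  refine ⟨⟨c.1 - u.length, hj⟩, by simp only [Fin.lt_def, Fin.val_mk]; omega, by simp only [Fin.lt_def, Fin.val_mk]; omega, ?_⟩
  have hcc : (⟨u.length + (c.1 - u.length), hlen _ hj⟩ : Fin (u ++ v ++ w).length) = c := by
    apply Fin.ext
    simp only
    omega
  rw [← hget' (c.1 - u.length) hj, hcc, hc3, hget' a.1 a.2]

lemma sip_mem_split {δ₁ δ₂ : List SIdx} {x : SIdx}
    (h : SIP (δ₁ ++ (x :: (δ₂ ++ [x])))) : x.succ ∈ δ₂ := by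
  have hlen : (δ₁ ++ (x :: (δ₂ ++ [x]))).length = δ₁.length + δ₂.length + 2 := by
    simp only [List.length_append, List.length_cons, List.length_append, List.length_cons,
      List.length_nil]
    omega
  have ha : δ₁.length < (δ₁ ++ (x :: (δ₂ ++ [x]))).length := by omega
  have hb : δ₁.length + δ₂.length + 1 < (δ₁ ++ (x :: (δ₂ ++ [x]))).length := by omega
  have hga : (δ₁ ++ (x :: (δ₂ ++ [x]))).get ⟨δ₁.length, ha⟩ = x := by
    show (δ₁ ++ (x :: (δ₂ ++ [x])))[δ₁.length]'ha = x
    rw [List.getElem_append_right (le_refl _)]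
    simp
  have hgb : (δ₁ ++ (x :: (δ₂ ++ [x]))).get ⟨δ₁.length + δ₂.length + 1, hb⟩ = x := by
    show (δ₁ ++ (x :: (δ₂ ++ [x])))[δ₁.length + δ₂.length + 1]'hb = x
    rw [List.getElem_append_right (by omega)]
    have e : δ₁.length + δ₂.length + 1 - δ₁.length = δ₂.length + 1 := by omega
    simp only [e, List.getElem_cons_succ]
    simp
  obtain ⟨c, hc1, hc2, hc3⟩ := h ⟨δ₁.length, ha⟩ ⟨δ₁.length + δ₂.length + 1, hb⟩
    (by simp only [Fin.lt_def, Fin.val_mk]; omega) (by rw [hga, hgb])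
  simp only [Fin.lt_def, Fin.val_mk] at hc1 hc2
  rw [hga] at hc3
  rcases c with ⟨cv, hcv⟩
  simp only at hc1 hc2
  obtain ⟨j, rfl⟩ : ∃ j, cv = δ₁.length + 1 + j := ⟨cv - δ₁.length - 1, by omega⟩
  have hj : j < δ₂.length := by omega
  have hthis : (δ₁ ++ (x :: (δ₂ ++ [x]))).get ⟨δ₁.length + 1 + j, hcv⟩ = δ₂[j]'hj := by
    show (δ₁ ++ (x :: (δ₂ ++ [x])))[δ₁.length + 1 + j]'hcv = δ₂[j]'hj
    rw [List.getElem_append_right (by omega : δ₁.length ≤ δ₁.length + 1 + j)]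
    have e : δ₁.length + 1 + j - δ₁.length = j + 1 := by omega
    simp only [e, List.getElem_cons_succ]
    rw [List.getElem_append_left hj]
  rw [hthis] at hc3
  rw [← hc3]
  exact List.getElem_mem _

lemma sip_mem_split' {δ₁ δ₂ : List SIdx} {x : SIdx}
    (h : SIP (x :: (δ₁ ++ (x :: δ₂)))) : x.succ ∈ δ₁ := by
  have hlen : (x :: (δ₁ ++ (x :: δ₂))).length = δ₁.length + δ₂.length + 2 := by
    simp only [List.length_cons, List.length_append]
    omega
  have ha : 0 < (x :: (δ₁ ++ (x :: δ₂))).length := by omega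
  have hb : δ₁.length + 1 < (x :: (δ₁ ++ (x :: δ₂))).length := by omega
  have hga : (x :: (δ₁ ++ (x :: δ₂))).get ⟨0, ha⟩ = x := rfl
  have hgb : (x :: (δ₁ ++ (x :: δ₂))).get ⟨δ₁.length + 1, hb⟩ = x := by
    show (x :: (δ₁ ++ (x :: δ₂)))[δ₁.length + 1]'hb = x
    rw [List.getElem_cons_succ, List.getElem_append_right (le_refl _)]
    simp
  obtain ⟨c, hc1, hc2, hc3⟩ := h ⟨0, ha⟩ ⟨δ₁.length + 1, hb⟩
    (by simp only [Fin.lt_def, Fin.val_mk]; omega) (by rw [hga, hgb])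
  simp only [Fin.lt_def, Fin.val_mk] at hc1 hc2
  rw [hga] at hc3
  rcases c with ⟨cv, hcv⟩
  simp only at hc1 hc2
  obtain ⟨j, rfl⟩ : ∃ j, cv = j + 1 := ⟨cv - 1, by omega⟩
  have hj : j < δ₁.length := by omega
  have hthis : (x :: (δ₁ ++ (x :: δ₂))).get ⟨j + 1, hcv⟩ = δ₁[j]'hj := by
    show (x :: (δ₁ ++ (x :: δ₂)))[j + 1]'hcv = δ₁[j]'hj
    rw [List.getElem_cons_succ, List.getElem_append_left hj]
  rw [hthis] at hc3
  rw [← hc3]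
  exact List.getElem_mem _
/-! ### matrix computation layer -/

section MatrixLayer

variable {m n : ℕ}

lemma prodAssign_nil (Xs : List (Matrix (Fin n) (Fin n) ℂ)) :
    prodAssign m n [] Xs = 1 := by simp [prodAssign]

lemma prodAssign_cons (k : SIdx) (X : Matrix (Fin n) (Fin n) ℂ) (t : List SIdx)
    (Xs : List (Matrix (Fin n) (Fin n) ℂ)) :
    prodAssign m n (k :: t) (X :: Xs) = elemMat m n k X * prodAssign m n t Xs := by
  simp [prodAssign]

lemma prodAssign_snoc (t : List SIdx) (Xs : List (Matrix (Fin n) (Fin n) ℂ))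
    (k : SIdx) (Y : Matrix (Fin n) (Fin n) ℂ) (h : t.length = Xs.length) :
    prodAssign m n (t ++ [k]) (Xs ++ [Y]) = prodAssign m n t Xs * elemMat m n k Y := by
  rw [prodAssign, prodAssign, List.zip_append h]
  simp

lemma rowSel_mul' (r : ℕ) (hr : r < m) (M : Matrix (Fin m × Fin n) (Fin m × Fin n) ℂ) :
    rowSel m n ((r : ℤ) + 1) * M = Matrix.of fun p q => M (⟨r, hr⟩, p) q := by
  ext p q
  rw [Matrix.mul_apply, Finset.sum_eq_single ((⟨r, hr⟩ : Fin m), p)]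
  · simp [rowSel]
  · intro x _ hx
    have hcond : ¬((x.1 : ℕ) = r ∧ p = x.2) := by
      rintro ⟨h1, h2⟩
      exact hx (Prod.ext (Fin.ext h1) h2.symm)
    simp [rowSel, hcond]
  · intro h
    exact absurd (Finset.mem_univ _) h

lemma mul_colSel' (r : ℕ) (hr : r < m) (M : Matrix (Fin m × Fin n) (Fin m × Fin n) ℂ) :
    M * colSel m n ((r : ℤ) + 1) = Matrix.of fun p q => M p (⟨r, hr⟩, q) := by
  ext p q
  rw [Matrix.mul_apply, Finset.sum_eq_single ((⟨r, hr⟩ : Fin m), q)]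
  · simp [colSel]
  · intro x _ hx
    have hcond : ¬((x.1 : ℕ) = r ∧ x.2 = q) := by
      rintro ⟨h1, h2⟩
      exact hx (Prod.ext (Fin.ext h1) h2)
    simp [colSel, hcond]
  · intro h
    exact absurd (Finset.mem_univ _) h

lemma rowSel_apply' (r : ℕ) (p : Fin n) (q : Fin m × Fin n) :
    rowSel m n ((r : ℤ) + 1) p q = if (q.1 : ℕ) = r ∧ p = q.2 then 1 else 0 := by
  have hiff : (((q.1 : ℕ) : ℤ) + 1 = (r : ℤ) + 1 ∧ p = q.2) ↔ ((q.1 : ℕ) = r ∧ p = q.2) := by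
    constructor <;> rintro ⟨h1, h2⟩ <;> exact ⟨by omega, h2⟩
  simp only [rowSel, hiff]

lemma colSel_apply' (r : ℕ) (p : Fin m × Fin n) (q : Fin n) :
    colSel m n ((r : ℤ) + 1) p q = if (p.1 : ℕ) = r ∧ p.2 = q then 1 else 0 := by
  have hiff : (((p.1 : ℕ) : ℤ) + 1 = (r : ℤ) + 1 ∧ p.2 = q) ↔ ((p.1 : ℕ) = r ∧ p.2 = q) := by
    constructor <;> rintro ⟨h1, h2⟩ <;> exact ⟨by omega, h2⟩
  simp only [colSel, hiff]

lemma elemMat_row_id (k : SIdx) (X : Matrix (Fin n) (Fin n) ℂ) (r : ℕ) (hr : r < m)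
    (hle : k.val ≤ m)
    (h0 : k.val = 0 → r ≠ m - 1)
    (hm : 0 < k.val → k.val = m → r ≠ 0)
    (hmid : 0 < k.val → k.val < m → r ≠ m - k.val - 1 ∧ r ≠ m - k.val)
    (p : Fin n) (q : Fin m × Fin n) :
    elemMat m n k X (⟨r, hr⟩, p) q = if (q.1 : ℕ) = r ∧ p = q.2 then 1 else 0 := by
  rcases q with ⟨s, u⟩
  by_cases hk0 : k.val = 0
  · simp only [elemMat, if_pos hk0]
    by_cases hrs : (⟨r, hr⟩ : Fin m) = s
    · have hs : (s : ℕ) = r := by rw [← hrs]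
      rw [if_pos hrs, if_neg (h0 hk0)]
      simp [hs]
    · have hcond : ¬((s : ℕ) = r ∧ p = u) := fun ⟨h1, _⟩ => hrs (Fin.ext h1.symm)
      rw [if_neg hrs, if_neg hcond]
  · by_cases hkm : k.val = m
    · simp only [elemMat, if_neg hk0, if_pos hkm]
      have hr0 : r ≠ 0 := hm (by omega) hkm
      by_cases hrs : (⟨r, hr⟩ : Fin m) = s
      · have hs : (s : ℕ) = r := by rw [← hrs]
        rw [if_pos hrs, if_neg hr0]
        simp [hs]
      · have hcond : ¬((s : ℕ) = r ∧ p = u) := fun ⟨h1, _⟩ => hrs (Fin.ext h1.symm)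
        rw [if_neg hrs, if_neg hcond]
    · obtain ⟨ha, hb⟩ := hmid (by omega) (by omega)
      simp only [elemMat, if_neg hk0, if_neg hkm]
      rw [if_neg (by rintro ⟨h, -⟩; exact ha h)]
      rw [if_neg (by rintro (⟨h, -⟩ | ⟨h, -⟩); exacts [ha h, hb h])]
      rw [if_neg (by rintro ⟨h, -⟩; exact hb h)]
      have key : (((⟨r, hr⟩ : Fin m), p) = ((s, u) : Fin m × Fin n))
          ↔ ((s : ℕ) = r ∧ p = u) := by
        constructor
        · intro he
          injection he with h1 h2
          exact ⟨(congrArg Fin.val h1).symm, h2⟩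
        · rintro ⟨h1, h2⟩
          subst h2
          exact congrArg (·, p) (Fin.ext h1.symm)
      simp only [key]

lemma elemMat_col_id (k : SIdx) (X : Matrix (Fin n) (Fin n) ℂ) (r : ℕ) (hr : r < m)
    (hle : k.val ≤ m)
    (h0 : k.val = 0 → r ≠ m - 1)
    (hm : 0 < k.val → k.val = m → r ≠ 0)
    (hmid : 0 < k.val → k.val < m → r ≠ m - k.val - 1 ∧ r ≠ m - k.val)
    (p : Fin m × Fin n) (u : Fin n) :
    elemMat m n k X p (⟨r, hr⟩, u) = if (p.1 : ℕ) = r ∧ p.2 = u then 1 else 0 := by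
  rcases p with ⟨s, w⟩
  by_cases hk0 : k.val = 0
  · simp only [elemMat, if_pos hk0]
    by_cases hrs : s = (⟨r, hr⟩ : Fin m)
    · have hs : (s : ℕ) = r := by rw [hrs]
      have hsm : (s : ℕ) ≠ m - 1 := by rw [hs]; exact h0 hk0
      rw [if_pos hrs, if_neg hsm]
      simp [hs]
    · have hcond : ¬((s : ℕ) = r ∧ w = u) := fun ⟨h1, _⟩ => hrs (Fin.ext h1)
      rw [if_neg hrs, if_neg hcond]
  · by_cases hkm : k.val = m
    · simp only [elemMat, if_neg hk0, if_pos hkm]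
      have hr0 : r ≠ 0 := hm (by omega) hkm
      by_cases hrs : s = (⟨r, hr⟩ : Fin m)
      · have hs : (s : ℕ) = r := by rw [hrs]
        have hs0 : (s : ℕ) ≠ 0 := by rw [hs]; exact hr0
        rw [if_pos hrs, if_neg hs0]
        simp [hs]
      · have hcond : ¬((s : ℕ) = r ∧ w = u) := fun ⟨h1, _⟩ => hrs (Fin.ext h1)
        rw [if_neg hrs, if_neg hcond]
    · obtain ⟨ha, hb⟩ := hmid (by omega) (by omega)
      simp only [elemMat, if_neg hk0, if_neg hkm]
      rw [if_neg (by rintro ⟨-, h⟩; exact ha h)]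
      rw [if_neg (by rintro (⟨-, h⟩ | ⟨-, h⟩); exacts [hb h, ha h])]
      rw [if_neg (by rintro ⟨-, h⟩; exact hb h)]
      have key : (((s, w) : Fin m × Fin n) = ((⟨r, hr⟩ : Fin m), u))
          ↔ ((s : ℕ) = r ∧ w = u) := by
        constructor
        · intro he
          injection he with h1 h2
          exact ⟨congrArg Fin.val h1, h2⟩
        · rintro ⟨h1, h2⟩
          subst h2
          exact congrArg (·, w) (Fin.ext h1)
      simp only [key]

end MatrixLayer
section MatrixLayer2

variable {m n : ℕ}

lemma rowSel_untouched (k : SIdx) (Y : Matrix (Fin n) (Fin n) ℂ) (r : ℕ) (hr : r < m)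
    (hle : k.val ≤ m)
    (h0 : k.val = 0 → r ≠ m - 1)
    (hm : 0 < k.val → k.val = m → r ≠ 0)
    (hmid : 0 < k.val → k.val < m → r ≠ m - k.val - 1 ∧ r ≠ m - k.val) :
    rowSel m n ((r : ℤ) + 1) * elemMat m n k Y = rowSel m n ((r : ℤ) + 1) := by
  rw [rowSel_mul' r hr]
  ext p q
  rw [Matrix.of_apply, elemMat_row_id k Y r hr hle h0 hm hmid p q, rowSel_apply']

lemma colSel_untouched (k : SIdx) (Y : Matrix (Fin n) (Fin n) ℂ) (r : ℕ) (hr : r < m)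
    (hle : k.val ≤ m)
    (h0 : k.val = 0 → r ≠ m - 1)
    (hm : 0 < k.val → k.val = m → r ≠ 0)
    (hmid : 0 < k.val → k.val < m → r ≠ m - k.val - 1 ∧ r ≠ m - k.val) :
    elemMat m n k Y * colSel m n ((r : ℤ) + 1) = colSel m n ((r : ℤ) + 1) := by
  rw [mul_colSel' r hr]
  ext p q
  rw [Matrix.of_apply, elemMat_col_id k Y r hr hle h0 hm hmid p q, colSel_apply']

lemma elemMat_row_step (v : ℕ) (hv1 : 0 < v) (hv2 : v < m) (Y : Matrix (Fin n) (Fin n) ℂ)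
    (hr : m - v < m) (p : Fin n) (q : Fin m × Fin n) :
    elemMat m n (SIdx.pos v) Y (⟨m - v, hr⟩, p) q
      = if (q.1 : ℕ) = m - v - 1 ∧ p = q.2 then 1 else 0 := by
  rcases q with ⟨s, u⟩
  simp only [elemMat, SIdx.val, SIdx.isNeg, Nat.sub_sub]
  rw [if_neg (by omega : ¬v = 0), if_neg (by omega : ¬v = m)]
  rw [if_neg (by omega)]
  by_cases hs : (s : ℕ) = m - (v + 1)
  · rw [if_pos (Or.inr ⟨trivial, hs⟩)]
    simp [hs]
  · have hcond : ¬((s : ℕ) = m - (v + 1) ∧ p = u) := by rintro ⟨h, -⟩; exact hs h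
    rw [if_neg (by rintro (⟨h, -⟩ | ⟨-, h⟩); exacts [by omega, hs h])]
    by_cases hs2 : (s : ℕ) = m - v
    · rw [if_pos ⟨trivial, hs2⟩]
      simp [hcond]
    · rw [if_neg (by rintro ⟨-, h⟩; exact hs2 h)]
      rw [if_neg (by
        intro he
        injection he with h1 h2
        exact hs2 (congrArg Fin.val h1).symm)]
      simp [hcond]

lemma elemMat_col_step (v : ℕ) (hv1 : 0 < v) (hv2 : v < m) (Y : Matrix (Fin n) (Fin n) ℂ)
    (hr : m - v < m) (p : Fin m × Fin n) (u : Fin n) :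
    elemMat m n (SIdx.pos v) Y p (⟨m - v, hr⟩, u)
      = if (p.1 : ℕ) = m - v - 1 ∧ p.2 = u then 1 else 0 := by
  rcases p with ⟨s, w⟩
  simp only [elemMat, SIdx.val, SIdx.isNeg, Nat.sub_sub]
  rw [if_neg (by omega : ¬v = 0), if_neg (by omega : ¬v = m)]
  rw [if_neg (by omega)]
  by_cases hs : (s : ℕ) = m - (v + 1)
  · rw [if_pos (Or.inl ⟨hs, trivial⟩)]
    simp [hs]
  · have hcond : ¬((s : ℕ) = m - (v + 1) ∧ w = u) := by rintro ⟨h, -⟩; exact hs h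
    rw [if_neg (by rintro (⟨h, -⟩ | ⟨-, h⟩); exacts [hs h, by omega])]
    by_cases hs2 : (s : ℕ) = m - v
    · rw [if_pos ⟨hs2, trivial⟩]
      simp [hcond]
    · rw [if_neg (by rintro ⟨h, -⟩; exact hs2 h)]
      rw [if_neg (by
        intro he
        injection he with h1 h2
        exact hs2 (congrArg Fin.val h1))]
      simp [hcond]

lemma rowSel_step (v : ℕ) (hv1 : 0 < v) (hv2 : v < m) (Y : Matrix (Fin n) (Fin n) ℂ) :
    rowSel m n (((m - v : ℕ) : ℤ) + 1) * elemMat m n (SIdx.pos v) Y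
      = rowSel m n (((m - v - 1 : ℕ) : ℤ) + 1) := by
  rw [rowSel_mul' (m - v) (by omega)]
  ext p q
  rw [Matrix.of_apply, elemMat_row_step v hv1 hv2 Y (by omega) p q, rowSel_apply']

lemma colSel_step (v : ℕ) (hv1 : 0 < v) (hv2 : v < m) (Y : Matrix (Fin n) (Fin n) ℂ) :
    elemMat m n (SIdx.pos v) Y * colSel m n (((m - v : ℕ) : ℤ) + 1)
      = colSel m n (((m - v - 1 : ℕ) : ℤ) + 1) := by
  rw [mul_colSel' (m - v) (by omega)]
  ext p q
  rw [Matrix.of_apply, elemMat_col_step v hv1 hv2 Y (by omega) p q, colSel_apply']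

end MatrixLayer2
section CoreSteps

variable {m n : ℕ}

lemma row_step_core {δ : List SIdx} (k : SIdx) (Y : Matrix (Fin n) (Fin n) ℂ)
    (hm2 : 2 ≤ m)
    (h0 : SIdx.pos 0 ∈ δ)
    (hδ : ∀ x ∈ δ, x.val + 1 ≤ m)
    (hkneg : k.isNeg = false) (hkval : k.val + 2 ≤ m)
    (hsip : SIP (δ ++ [k])) :
    rowSel m n ((m : ℤ) - consAt δ (SIdx.pos 0)) * elemMat m n k Y
      = rowSel m n ((m : ℤ) - consAt (δ ++ [k]) (SIdx.pos 0)) := by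
  obtain ⟨c, hc, hch, hnch⟩ := consAt_spec h0
  have hposc : SIdx.pos c ∈ δ := hch.subset (pos_mem_chain c)
  have hcm : c + 1 ≤ m := hδ _ hposc
  obtain ⟨v, rfl⟩ : ∃ v, k = SIdx.pos v := by
    cases k with
    | pos v => exact ⟨v, rfl⟩
    | neg v => simp [SIdx.isNeg] at hkneg
  have hv2 : v + 2 ≤ m := hkval
  by_cases hvc1 : v = c + 1
  · subst hvc1
    have h1 : chain (c+1) <+ δ ++ [SIdx.pos (c+1)] := by
      rw [chain_succ]
      exact hch.append (List.Sublist.refl _)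
    have h2 : ¬ chain (c+2) <+ δ ++ [SIdx.pos (c+1)] := by
      intro hcon
      rw [show c + 2 = (c+1)+1 from rfl, chain_succ (c+1)] at hcon
      rcases snoc_sublist_snoc hcon with h | h
      · exact hnch ((List.sublist_append_left _ _).trans h)
      · injection h with h'
        omega
    rw [hc, consAt_eq h1 h2]
    have e1 : (m : ℤ) - (c : ℕ) = ((m - (c+1) : ℕ) : ℤ) + 1 := by omega
    have e2 : (m : ℤ) - ((c+1 : ℕ) : ℤ) = ((m - (c+1) - 1 : ℕ) : ℤ) + 1 := by omega
    rw [e1, rowSel_step (c+1) (by omega) (by omega) Y, e2]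
  · by_cases hvc0 : v = c
    · exfalso
      subst hvc0
      rw [chain_snoc] at hch
      obtain ⟨δ₁, δ₂, rfl, hfr⟩ := snoc_sublist_decomp hch
      have hsucc : (SIdx.pos v).succ ∈ δ₂ := by
        apply sip_mem_split (δ₁ := δ₁) (δ₂ := δ₂) (x := SIdx.pos v)
        simpa using hsip
      have hsucc' : SIdx.pos (v+1) ∈ δ₂ := hsucc
      apply hnch
      rw [chain_succ, chain_snoc]
      have hsub : (((List.range v).map SIdx.pos ++ [SIdx.pos v]) ++ [SIdx.pos (v+1)])
          <+ ((δ₁ ++ [SIdx.pos v]) ++ δ₂) :=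
        (hfr.append (List.Sublist.refl _)).append (List.singleton_sublist.mpr hsucc')
      simpa using hsub
    · have h1 : chain c <+ δ ++ [SIdx.pos v] := hch.trans (List.sublist_append_left _ _)
      have h2 : ¬ chain (c+1) <+ δ ++ [SIdx.pos v] := by
        intro hcon
        rw [chain_succ] at hcon
        rcases snoc_sublist_snoc hcon with h | h
        · rw [← chain_succ] at h
          exact hnch h
        · injection h with h'
          omega
      rw [hc, consAt_eq h1 h2]
      have e1 : (m : ℤ) - (c : ℕ) = ((m - c - 1 : ℕ) : ℤ) + 1 := by omega
      rw [e1]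
      apply rowSel_untouched
      · omega
      · show v ≤ m
        omega
      · show v = 0 → m - c - 1 ≠ m - 1
        omega
      · show 0 < v → v = m → m - c - 1 ≠ 0
        omega
      · show 0 < v → v < m → m - c - 1 ≠ m - v - 1 ∧ m - c - 1 ≠ m - v
        omega

lemma col_step_core {δ : List SIdx} (k : SIdx) (Y : Matrix (Fin n) (Fin n) ℂ)
    (hm2 : 2 ≤ m)
    (h0 : SIdx.pos 0 ∈ δ)
    (hδ : ∀ x ∈ δ, x.val + 1 ≤ m)
    (hkneg : k.isNeg = false) (hkval : k.val + 2 ≤ m)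
    (hsip : SIP (k :: δ)) :
    elemMat m n k Y * colSel m n ((m : ℤ) - invsAt δ (SIdx.pos 0))
      = colSel m n ((m : ℤ) - invsAt (k :: δ) (SIdx.pos 0)) := by
  obtain ⟨q, hq, hrch, hnr⟩ := invsAt_spec h0
  have hposq : SIdx.pos q ∈ δ := hrch.subset (pos_mem_rchain q)
  have hqm : q + 1 ≤ m := hδ _ hposq
  obtain ⟨v, rfl⟩ : ∃ v, k = SIdx.pos v := by
    cases k with
    | pos v => exact ⟨v, rfl⟩
    | neg v => simp [SIdx.isNeg] at hkneg
  have hv2 : v + 2 ≤ m := hkval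
  by_cases hvq1 : v = q + 1
  · subst hvq1
    have h1 : rchain (q+1) <+ SIdx.pos (q+1) :: δ := by
      rw [rchain_cons]
      exact hrch.cons₂ _
    have h2 : ¬ rchain (q+2) <+ SIdx.pos (q+1) :: δ := by
      intro hcon
      rw [show q + 2 = (q+1)+1 from rfl, rchain_cons (q+1)] at hcon
      rcases List.sublist_cons_iff.mp hcon with h | ⟨r, hre, hrs⟩
      · exact hnr ((List.sublist_cons_self _ _).trans h)
      · injection hre with h1' h2'
        injection h1' with h1''
        omega
    rw [hq, invsAt_eq h1 h2]
    have e1 : (m : ℤ) - (q : ℕ) = ((m - (q+1) : ℕ) : ℤ) + 1 := by omega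
    have e2 : (m : ℤ) - ((q+1 : ℕ) : ℤ) = ((m - (q+1) - 1 : ℕ) : ℤ) + 1 := by omega
    rw [e1, colSel_step (q+1) (by omega) (by omega) Y, e2]
  · by_cases hvq0 : v = q
    · exfalso
      subst hvq0
      rw [rchain_eq] at hrch
      obtain ⟨δ₁, δ₂, rfl, htl⟩ := cons_sublist_decomp hrch
      have hsucc : (SIdx.pos v).succ ∈ δ₁ := by
        apply sip_mem_split' (δ₁ := δ₁) (δ₂ := δ₂) (x := SIdx.pos v)
        exact hsip
      have hsucc' : SIdx.pos (v+1) ∈ δ₁ := hsucc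
      obtain ⟨a, b, rfl⟩ := List.append_of_mem hsucc'
      apply hnr
      rw [rchain_cons, rchain_eq]
      have hsub : SIdx.pos (v+1) :: (SIdx.pos v :: ((List.range v).map SIdx.pos).reverse)
          <+ SIdx.pos (v+1) :: (b ++ SIdx.pos v :: δ₂) :=
        ((htl.cons₂ (SIdx.pos v)).trans (List.sublist_append_right b _)).cons₂ _
      have := hsub.trans (List.sublist_append_right a _)
      simpa using this
    · have h1 : rchain q <+ SIdx.pos v :: δ := hrch.trans (List.sublist_cons_self _ _)
      have h2 : ¬ rchain (q+1) <+ SIdx.pos v :: δ := by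
        intro hcon
        rw [rchain_cons] at hcon
        rcases List.sublist_cons_iff.mp hcon with h | ⟨r, hre, hrs⟩
        · exact hnr (by rw [rchain_cons]; exact h)
        · injection hre with h1' h2'
          injection h1' with h1''
          omega
      rw [hq, invsAt_eq h1 h2]
      have e1 : (m : ℤ) - (q : ℕ) = ((m - q - 1 : ℕ) : ℤ) + 1 := by omega
      rw [e1]
      apply colSel_untouched
      · omega
      · show v ≤ m
        omega
      · show v = 0 → m - q - 1 ≠ m - 1
        omega
      · show 0 < v → v = m → m - q - 1 ≠ 0
        omega
      · show 0 < v → v < m → m - q - 1 ≠ m - v - 1 ∧ m - q - 1 ≠ m - v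
        omega

end CoreSteps
section Loops

variable {m n : ℕ}

lemma row_sigma_loop (hm2 : 2 ≤ m) :
    ∀ (β : List SIdx) (Xs : List (Matrix (Fin n) (Fin n) ℂ)) (δ : List SIdx),
    β.length = Xs.length →
    SIdx.pos 0 ∈ δ →
    (∀ x ∈ δ, x.val + 1 ≤ m) →
    (∀ k ∈ β, k.isNeg = false ∧ k.val + 2 ≤ m) →
    SIP (δ ++ β) →
    rowSel m n ((m : ℤ) - consAt δ (SIdx.pos 0)) * prodAssign m n β Xs
      = rowSel m n ((m : ℤ) - consAt (δ ++ β) (SIdx.pos 0)) := by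
  intro β
  induction β with
  | nil =>
    intro Xs δ _ _ _ _ _
    simp [prodAssign_nil]
  | cons k β ih =>
    intro Xs δ hlen h0 hδ hβ hsip
    cases Xs with
    | nil => simp at hlen
    | cons X Xs =>
      rw [prodAssign_cons, ← Matrix.mul_assoc]
      have hk := hβ k (List.mem_cons_self)
      have hstep := row_step_core (δ := δ) k X hm2 h0 hδ hk.1 hk.2
        (sip_of_eq (u := []) (w := β) hsip (by simp))
      rw [hstep]
      have hrec := ih Xs (δ ++ [k]) (by simpa using hlen)
        (List.mem_append_left _ h0)
        (by
          intro x hx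
          rcases List.mem_append.mp hx with h | h
          · exact hδ x h
          · rw [List.mem_singleton] at h
            subst h
            have := hk.2
            omega)
        (fun k' hk' => hβ k' (List.mem_cons_of_mem _ hk'))
        (sip_of_eq (u := []) (w := []) hsip (by simp))
      rw [hrec]
      have heq : (δ ++ [k]) ++ β = δ ++ k :: β := by simp
      rw [heq]

lemma row_tau_loop (hm2 : 2 ≤ m) (τ : List SIdx) (c : ℕ)
    (hτneg : ∀ x ∈ τ, x.isNeg = true)
    (hτval : ∀ x ∈ τ, x.val ≤ m)
    (hdisj : ∀ x ∈ τ, x.val ≠ c)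
    (hcm : c + 1 ≤ m) :
    ∀ (β : List SIdx) (Ys : List (Matrix (Fin n) (Fin n) ℂ)) (γ : List SIdx),
    β.length = Ys.length →
    (∀ k ∈ γ ++ β, k ∈ τ ∧ 2 ≤ k.val) →
    SIP (τ ++ (γ ++ β)) →
    rowSel m n ((m : ℤ) - (c : ℕ)) * prodAssign m n β Ys
      = rowSel m n ((m : ℤ) - (c : ℕ)) := by
  intro β
  induction β with
  | nil =>
    intro Ys γ _ _ _
    simp [prodAssign_nil]
  | cons k β ih =>
    intro Ys γ hlen hmem hsip
    cases Ys with
    | nil => simp at hlen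
    | cons Y Ys =>
      rw [prodAssign_cons, ← Matrix.mul_assoc]
      have hk := hmem k (by simp)
      obtain ⟨i, rfl⟩ : ∃ i, k = SIdx.neg i := by
        cases k with
        | pos i =>
          have := hτneg _ hk.1
          simp [SIdx.isNeg] at this
        | neg i => exact ⟨i, rfl⟩
      have hi2 : 2 ≤ i := hk.2
      obtain ⟨j, rfl⟩ : ∃ j, i = j + 1 := ⟨i - 1, by omega⟩
      have him : j + 1 ≤ m := hτval _ hk.1
      obtain ⟨δ₁, δ₂, hτeq⟩ := List.append_of_mem hk.1
      have hsip' : SIP (δ₁ ++ (SIdx.neg (j+1) :: ((δ₂ ++ γ) ++ [SIdx.neg (j+1)]))) :=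
        sip_of_eq (u := []) (w := β) hsip (by rw [hτeq]; simp)
      have hsucc : SIdx.neg j ∈ δ₂ ++ γ := sip_mem_split hsip'
      have hjτ : SIdx.neg j ∈ τ := by
        rcases List.mem_append.mp hsucc with h | h
        · rw [hτeq]
          exact List.mem_append_right _ (List.mem_cons_of_mem _ h)
        · exact (hmem _ (List.mem_append_left _ h)).1
      have hjne : j ≠ c := hdisj _ hjτ
      have hine : j + 1 ≠ c := hdisj _ hk.1
      have hrow : rowSel m n ((m : ℤ) - (c : ℕ)) * elemMat m n (SIdx.neg (j+1)) Y
          = rowSel m n ((m : ℤ) - (c : ℕ)) := by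
        have e1 : (m : ℤ) - (c : ℕ) = ((m - c - 1 : ℕ) : ℤ) + 1 := by omega
        rw [e1]
        apply rowSel_untouched
        · omega
        · show j + 1 ≤ m
          omega
        · show j + 1 = 0 → m - c - 1 ≠ m - 1
          omega
        · show 0 < j + 1 → j + 1 = m → m - c - 1 ≠ 0
          omega
        · show 0 < j + 1 → j + 1 < m → m - c - 1 ≠ m - (j+1) - 1 ∧ m - c - 1 ≠ m - (j+1)
          omega
      rw [hrow]
      have hmem' : ∀ x ∈ (γ ++ [SIdx.neg (j+1)]) ++ β, x ∈ τ ∧ 2 ≤ x.val := by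
        intro x hx
        apply hmem
        have heq : (γ ++ [SIdx.neg (j+1)]) ++ β = γ ++ SIdx.neg (j+1) :: β := by simp
        rwa [heq] at hx
      exact ih Ys (γ ++ [SIdx.neg (j+1)]) (by simpa using hlen) hmem'
        (sip_of_eq (u := []) (w := []) hsip (by simp))

lemma col_sigma_loop (hm2 : 2 ≤ m) :
    ∀ (β : List SIdx) (Xs : List (Matrix (Fin n) (Fin n) ℂ)) (δ : List SIdx),
    β.length = Xs.length →
    SIdx.pos 0 ∈ δ →
    (∀ x ∈ δ, x.val + 1 ≤ m) →
    (∀ k ∈ β, k.isNeg = false ∧ k.val + 2 ≤ m) →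
    SIP (β ++ δ) →
    prodAssign m n β Xs * colSel m n ((m : ℤ) - invsAt δ (SIdx.pos 0))
      = colSel m n ((m : ℤ) - invsAt (β ++ δ) (SIdx.pos 0)) := by
  intro β
  induction β using List.reverseRecOn with
  | nil =>
    intro Xs δ _ _ _ _ _
    simp [prodAssign_nil]
  | append_singleton β k ih =>
    intro Xs δ hlen h0 hδ hβ hsip
    rcases List.eq_nil_or_concat Xs with rfl | ⟨Xs', X, rfl⟩
    · simp at hlen
    · have hlen' : β.length = Xs'.length := by simpa using hlen
      rw [List.concat_eq_append, prodAssign_snoc β Xs' k X hlen', Matrix.mul_assoc]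
      have hk := hβ k (by simp)
      have hstep := col_step_core (δ := δ) k X hm2 h0 hδ hk.1 hk.2
        (sip_of_eq (u := β) (w := []) hsip (by simp))
      rw [hstep]
      have hrec := ih Xs' (k :: δ) hlen' (List.mem_cons_of_mem _ h0)
        (by
          intro x hx
          rcases List.mem_cons.mp hx with rfl | h
          · have := hk.2
            omega
          · exact hδ x h)
        (fun k' hk' => hβ k' (by simp [hk']))
        (sip_of_eq (u := []) (w := []) hsip (by simp))
      rw [hrec]
      have heq : β ++ (k :: δ) = (β ++ [k]) ++ δ := by simp
      rw [heq]

lemma col_tau_loop (hm2 : 2 ≤ m) (τ : List SIdx) (q : ℕ)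
    (hτneg : ∀ x ∈ τ, x.isNeg = true)
    (hτval : ∀ x ∈ τ, x.val ≤ m)
    (hdisj : ∀ x ∈ τ, x.val ≠ q)
    (hqm : q + 1 ≤ m) :
    ∀ (β : List SIdx) (Ys : List (Matrix (Fin n) (Fin n) ℂ)) (γ : List SIdx),
    β.length = Ys.length →
    (∀ k ∈ β ++ γ, k ∈ τ ∧ 2 ≤ k.val) →
    SIP ((β ++ γ) ++ τ) →
    prodAssign m n β Ys * colSel m n ((m : ℤ) - (q : ℕ))
      = colSel m n ((m : ℤ) - (q : ℕ)) := by
  intro β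
  induction β using List.reverseRecOn with
  | nil =>
    intro Ys γ _ _ _
    simp [prodAssign_nil]
  | append_singleton β k ih =>
    intro Ys γ hlen hmem hsip
    rcases List.eq_nil_or_concat Ys with rfl | ⟨Ys', Y, rfl⟩
    · simp at hlen
    · have hlen' : β.length = Ys'.length := by simpa using hlen
      rw [List.concat_eq_append, prodAssign_snoc β Ys' k Y hlen', Matrix.mul_assoc]
      have hk := hmem k (by simp)
      obtain ⟨i, rfl⟩ : ∃ i, k = SIdx.neg i := by
        cases k with
        | pos i =>
          have := hτneg _ hk.1
          simp [SIdx.isNeg] at this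
        | neg i => exact ⟨i, rfl⟩
      have hi2 : 2 ≤ i := hk.2
      obtain ⟨j, rfl⟩ : ∃ j, i = j + 1 := ⟨i - 1, by omega⟩
      have him : j + 1 ≤ m := hτval _ hk.1
      obtain ⟨δ₁, δ₂, hτeq⟩ := List.append_of_mem hk.1
      have hsip' : SIP (SIdx.neg (j+1) :: ((γ ++ δ₁) ++ (SIdx.neg (j+1) :: δ₂))) :=
        sip_of_eq (u := β) (w := []) hsip (by rw [hτeq]; simp)
      have hsucc : SIdx.neg j ∈ γ ++ δ₁ := sip_mem_split' hsip'
      have hjτ : SIdx.neg j ∈ τ := by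
        rcases List.mem_append.mp hsucc with h | h
        · exact (hmem _ (List.mem_append_right _ h)).1
        · rw [hτeq]
          exact List.mem_append_left _ h
      have hjne : j ≠ q := hdisj _ hjτ
      have hine : j + 1 ≠ q := hdisj _ hk.1
      have hcol : elemMat m n (SIdx.neg (j+1)) Y * colSel m n ((m : ℤ) - (q : ℕ))
          = colSel m n ((m : ℤ) - (q : ℕ)) := by
        have e1 : (m : ℤ) - (q : ℕ) = ((m - q - 1 : ℕ) : ℤ) + 1 := by omega
        rw [e1]
        apply colSel_untouched
        · omega
        · show j + 1 ≤ m
          omega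
        · show j + 1 = 0 → m - q - 1 ≠ m - 1
          omega
        · show 0 < j + 1 → j + 1 = m → m - q - 1 ≠ 0
          omega
        · show 0 < j + 1 → j + 1 < m → m - q - 1 ≠ m - (j+1) - 1 ∧ m - q - 1 ≠ m - (j+1)
          omega
      rw [hcol]
      have hmem' : ∀ x ∈ β ++ (SIdx.neg (j+1) :: γ), x ∈ τ ∧ 2 ≤ x.val := by
        intro x hx
        apply hmem
        have heq : (β ++ [SIdx.neg (j+1)]) ++ γ = β ++ SIdx.neg (j+1) :: γ := by simp
        rwa [heq]
      exact ih Ys' (SIdx.neg (j+1) :: γ) hlen' hmem'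
        (sip_of_eq (u := []) (w := []) hsip (by simp))

end Loops

end EGFPAux

open EGFPAux

/-- **Lemma 3.2 of the paper.** For an EGFP of `P(λ)` with `0 ∈ σ` and
`−m ∈ τ`:
`(e^T_{m−c₀(σ)} ⊗ I_n) M_{σ₂}(X₂) M_{τ₂}(Y₂) = e^T_{m−c₀(σ,σ₂)} ⊗ I_n` and
`M_{τ₁}(Y₁) M_{σ₁}(X₁) (e_{m−i₀(σ)} ⊗ I_n) = e_{m−i₀(σ₁,σ)} ⊗ I_n`. -/
theorem egfp_row_col_selection {m n : ℕ} (E : EGFPData m n)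
    (h0 : SIdx.pos 0 ∈ E.sig) (hτm : SIdx.neg m ∈ E.tau) :
    rowSel m n ((m : ℤ) - consAt E.sig (.pos 0)) *
        (prodAssign m n E.sig2 E.X2 * prodAssign m n E.tau2 E.Y2) =
      rowSel m n ((m : ℤ) - consAt (E.sig ++ E.sig2) (.pos 0)) ∧
    (prodAssign m n E.tau1 E.Y1 * prodAssign m n E.sig1 E.X1) *
        colSel m n ((m : ℤ) - invsAt E.sig (.pos 0)) =
      colSel m n ((m : ℤ) - invsAt (E.sig1 ++ E.sig) (.pos 0)) := by
  have hm2 := E.hm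
  have hnd : (E.sig.map SIdx.val ++ E.tau.map SIdx.val).Nodup :=
    (E.hperm.nodup_iff).mpr (List.nodup_range)
  rw [List.nodup_append] at hnd
  obtain ⟨-, -, hdisj⟩ := hnd
  have hbound : ∀ x ∈ E.sig.map SIdx.val ++ E.tau.map SIdx.val, x ≤ m := by
    intro x hx
    have := (E.hperm.mem_iff).mp hx
    rw [List.mem_range] at this
    omega
  have hmτ : m ∈ E.tau.map SIdx.val := List.mem_map.mpr ⟨SIdx.neg m, hτm, rfl⟩
  have hσval : ∀ x ∈ E.sig, x.val + 1 ≤ m := by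
    intro x hx
    have hxm : x.val ∈ E.sig.map SIdx.val := List.mem_map.mpr ⟨x, hx, rfl⟩
    have h1 : x.val ≤ m := hbound _ (List.mem_append_left _ hxm)
    have h2 : x.val ≠ m := fun he => hdisj _ hxm _ hmτ he
    omega
  have hτval : ∀ x ∈ E.tau, x.val ≤ m := fun x hx =>
    hbound _ (List.mem_append_right _ (List.mem_map.mpr ⟨x, hx, rfl⟩))
  constructor
  · have hrow1 := row_sigma_loop (m := m) (n := n) hm2 E.sig2 E.X2 E.sig E.hX2.1 h0 hσval
      (fun k hk => ⟨E.hsigpos k (E.hsig2 k hk).1, (E.hsig2 k hk).2⟩)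
      (sip_of_eq (u := E.sig1) (w := []) E.hSIPsig (by simp))
    obtain ⟨c, hc, hch, -⟩ := consAt_spec (List.mem_append_left _ h0 :
      SIdx.pos 0 ∈ E.sig ++ E.sig2)
    have hposc : SIdx.pos c ∈ E.sig ++ E.sig2 := hch.subset (pos_mem_chain c)
    have hcσ : SIdx.pos c ∈ E.sig := by
      rcases List.mem_append.mp hposc with h | h
      · exact h
      · exact (E.hsig2 _ h).1
    have hcm : c + 1 ≤ m := hσval _ hcσ
    have hdisjc : ∀ x ∈ E.tau, x.val ≠ c := by
      intro x hx he
      exact hdisj _ (List.mem_map.mpr ⟨_, hcσ, rfl⟩) _ (List.mem_map.mpr ⟨x, hx, he⟩) rfl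
    have hrow2 := row_tau_loop (m := m) (n := n) hm2 E.tau c E.htauneg hτval hdisjc hcm
      E.tau2 E.Y2 [] E.hY2.1
      (by intro k hk; exact E.htau2 k (by simpa using hk))
      (sip_of_eq (u := E.tau1) (w := []) E.hSIPtau (by simp))
    rw [← Matrix.mul_assoc, hrow1, hc, hrow2]
  · rw [Matrix.mul_assoc]
    have hcol1 := col_sigma_loop (m := m) (n := n) hm2 E.sig1 E.X1 E.sig E.hX1.1 h0 hσval
      (fun k hk => ⟨E.hsigpos k (E.hsig1 k hk).1, (E.hsig1 k hk).2⟩)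
      (sip_of_eq (u := []) (w := E.sig2) E.hSIPsig (by simp))
    obtain ⟨q, hq, hrch, -⟩ := invsAt_spec (List.mem_append_right _ h0 :
      SIdx.pos 0 ∈ E.sig1 ++ E.sig)
    have hposq : SIdx.pos q ∈ E.sig1 ++ E.sig := hrch.subset (pos_mem_rchain q)
    have hqσ : SIdx.pos q ∈ E.sig := by
      rcases List.mem_append.mp hposq with h | h
      · exact (E.hsig1 _ h).1
      · exact h
    have hqm : q + 1 ≤ m := hσval _ hqσ
    have hdisjq : ∀ x ∈ E.tau, x.val ≠ q := by
      intro x hx he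
      exact hdisj _ (List.mem_map.mpr ⟨_, hqσ, rfl⟩) _ (List.mem_map.mpr ⟨x, hx, he⟩) rfl
    have hcol2 := col_tau_loop (m := m) (n := n) hm2 E.tau q E.htauneg hτval hdisjq hqm
      E.tau1 E.Y1 [] E.hY1.1
      (by intro k hk; exact E.htau1 k (by simpa using hk))
      (sip_of_eq (u := []) (w := E.tau2) E.hSIPtau (by simp))
    rw [hcol1, hq, hcol2]
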